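/- arXiv:1104.2340 — 4 statements merged into one kernel-verified Lean document; each statement's English description precedes it below -/
import Mathlib

section
/- Let (X_n) be a nonnegative stochastic process adapted to a filtration (F_n) with X_0 = 0, satisfying E[X_{n+1} | F_n] ≤ X_n + B_n, where the B_n are nonnegative random variables with finite means (not necessarily adapted). Let X_T* = max{X_0, ..., X_T}. Then for any a > 0 and any T ∈ ℤ_+, P(X_T* ≥ a) ≤ (Σ_{n=0}^{T-1} E[B_n]) / a. -/
/-!
Absorb the drift still to come into the process:
`Y n = X (n ⊓ T) + ∑_{n ≤ k < T} E[B k | F n]`. The conditional expectations make `Y` adapted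
although `B` is not, the drift bound makes `Y` a nonnegative supermartingale, `Y` dominates `X`
up to time `T`, and `E[Y 0] = ∑_{k < T} E[B k]` since `X 0 = 0`. Doob's maximal inequality for
nonnegative supermartingales, obtained by optional stopping at the first time `Y` reaches
`[a, ∞)`, then bounds `a · P(max_{n ≤ T} Y n ≥ a)` by `E[Y 0]`.
-/

open MeasureTheory Finset

namespace MeasureTheory

variable {Ω : Type*} {m0 : MeasurableSpace Ω} {μ : Measure Ω} {F : Filtration ℕ m0}

theorem Supermartingale.expected_stoppedValue_antitone [SigmaFiniteFiltration μ F]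
    {Y : ℕ → Ω → ℝ} (hY : Supermartingale Y F μ) {τ π : Ω → ℕ∞} (hτ : IsStoppingTime F τ)
    (hπ : IsStoppingTime F π) (hle : τ ≤ π) {N : ℕ} (hbdd : ∀ ω, π ω ≤ N) :
    ∫ ω, stoppedValue Y π ω ∂μ ≤ ∫ ω, stoppedValue Y τ ω ∂μ := by
  have h := hY.neg.expected_stoppedValue_mono hτ hπ hle hbdd
  simp only [stoppedValue, Pi.neg_apply, integral_neg] at h
  exact neg_le_neg_iff.mp h

theorem Supermartingale.maximal_ineq [IsFiniteMeasure μ] {Y : ℕ → Ω → ℝ}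
    (hY : Supermartingale Y F μ) (hnonneg : ∀ n, 0 ≤ᵐ[μ] Y n) (ε : ℝ) (T : ℕ) :
    ε * μ.real {ω | ε ≤ (range (T + 1)).sup' nonempty_range_add_one fun n => Y n ω}
      ≤ ∫ ω, Y 0 ω ∂μ := by
  set S := {ω | ε ≤ (range (T + 1)).sup' nonempty_range_add_one fun n => Y n ω}
  set τ : Ω → ℕ∞ := fun ω => (hittingBtwn Y (Set.Ici ε) 0 T ω : ℕ)
  have hτ : IsStoppingTime F τ :=
    hY.stronglyAdapted.adapted.isStoppingTime_hittingBtwn measurableSet_Ici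
  have hτT : ∀ ω, τ ω ≤ T := fun ω => WithTop.coe_le_coe.2 (hittingBtwn_le ω)
  have hS : MeasurableSet S := measurableSet_le measurable_const
    (measurable_range_sup'' fun n _ => (hY.stronglyAdapted n).measurable.mono (F.le n) le_rfl)
  have hint : Integrable (stoppedValue Y τ) μ := integrable_stoppedValue ℕ hτ hY.integrable hτT
  have hhit : ∀ ω ∈ S, ε ≤ stoppedValue Y τ ω := fun ω hω => by
    obtain ⟨j, hj, hεj⟩ : ∃ j ∈ range (T + 1), ε ≤ Y j ω := (le_sup'_iff _).1 hω
    exact stoppedValue_hittingBtwn_mem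
      ⟨j, ⟨j.zero_le, Nat.lt_succ_iff.1 (mem_range.1 hj)⟩, Set.mem_Ici.2 hεj⟩
  calc ε * μ.real S ≤ ∫ ω in S, stoppedValue Y τ ω ∂μ :=
        setIntegral_ge_of_const_le_real hS (measure_ne_top μ S) hhit hint.integrableOn
    _ ≤ ∫ ω, stoppedValue Y τ ω ∂μ :=
        setIntegral_le_integral hint (ae_all_iff.2 hnonneg |>.mono fun ω hω => hω _)
    _ ≤ ∫ ω, Y 0 ω ∂μ := by
        simpa only [stoppedValue_const] using Supermartingale.expected_stoppedValue_antitone hY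
          (isStoppingTime_const F 0) hτ (fun _ => WithTop.coe_le_coe.2 (Nat.zero_le _)) hτT

theorem condExp_le_add_condExp {m : MeasurableSpace Ω} (hm : m ≤ m0) [SigmaFinite (μ.trim hm)]
    {f g h : Ω → ℝ} (hg : StronglyMeasurable[m] g) (hgi : Integrable g μ) (hhi : Integrable h μ)
    (hf : μ[f | m] ≤ᵐ[μ] g + h) : μ[f | m] ≤ᵐ[μ] g + μ[h | m] := by
  have hgh : μ[g + h | m] =ᵐ[μ] g + μ[h | m] := by
    simpa only [condExp_of_stronglyMeasurable hm hg hgi] using condExp_add hgi hhi m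
  calc μ[f | m] = μ[μ[f | m] | m] :=
        (condExp_of_stronglyMeasurable hm stronglyMeasurable_condExp integrable_condExp).symm
    _ ≤ᵐ[μ] μ[g + h | m] := condExp_mono integrable_condExp (hgi.add hhi) hf
    _ =ᵐ[μ] g + μ[h | m] := hgh

theorem sum_condExp_nonneg {m : MeasurableSpace Ω} {B : ℕ → Ω → ℝ} (hB : ∀ k, 0 ≤ᵐ[μ] B k)
    (s : Finset ℕ) : 0 ≤ᵐ[μ] ∑ k ∈ s, μ[B k | m] := by
  filter_upwards [ae_all_iff.2 fun k => condExp_nonneg (m := m) (hB k)] with ω hω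
  simpa only [Pi.zero_apply, Finset.sum_apply] using sum_nonneg fun k _ => hω k

noncomputable def driftMajorant (μ : Measure Ω) (F : Filtration ℕ m0) (X B : ℕ → Ω → ℝ)
    (T n : ℕ) : Ω → ℝ :=
  X (min n T) + ∑ k ∈ Ico n T, μ[B k | F n]

section driftMajorant

variable {X B : ℕ → Ω → ℝ} {T n : ℕ}

theorem driftMajorant_of_lt (hn : n < T) :
    driftMajorant μ F X B T n = X n + μ[B n | F n] + ∑ k ∈ Ico (n + 1) T, μ[B k | F n] := by
  rw [driftMajorant, min_eq_left hn.le, ← insert_Ico_add_one_left_eq_Ico hn,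
    sum_insert (by simp), add_assoc]

theorem driftMajorant_of_le (hn : T ≤ n) : driftMajorant μ F X B T n = X T := by
  simp [driftMajorant, min_eq_right hn, Ico_eq_empty_of_le hn]

theorem stronglyAdapted_driftMajorant (hX : StronglyAdapted F X) :
    StronglyAdapted F (driftMajorant μ F X B T) := fun n =>
  ((hX (min n T)).mono (F.mono (min_le_left n T))).add
    (stronglyMeasurable_sum _ fun _ _ => stronglyMeasurable_condExp)

theorem integrable_driftMajorant (hXint : ∀ n, Integrable (X n) μ) (n : ℕ) :
    Integrable (driftMajorant μ F X B T n) μ :=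
  (hXint _).add (integrable_finsetSum' _ fun _ _ => integrable_condExp)

theorem condExp_driftMajorant_succ [IsFiniteMeasure μ] (hXint : ∀ n, Integrable (X n) μ)
    (hn : n < T) :
    μ[driftMajorant μ F X B T (n + 1) | F n]
      =ᵐ[μ] μ[X (n + 1) | F n] + ∑ k ∈ Ico (n + 1) T, μ[B k | F n] := by
  rw [driftMajorant, min_eq_left hn]
  refine (condExp_add (hXint _) (integrable_finsetSum' _ fun _ _ => integrable_condExp) _).trans
    (Filter.EventuallyEq.rfl.add ?_)
  refine (condExp_finsetSum (fun _ _ => integrable_condExp) _).trans ?_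
  exact eventuallyEq_sum fun _ _ => condExp_condExp_of_le (F.mono n.le_succ) (F.le (n + 1))

theorem supermartingale_driftMajorant [IsFiniteMeasure μ] (hX : StronglyAdapted F X)
    (hXint : ∀ n, Integrable (X n) μ) (hBint : ∀ n, Integrable (B n) μ)
    (hdrift : ∀ n, μ[X (n + 1) | F n] ≤ᵐ[μ] X n + B n) :
    Supermartingale (driftMajorant μ F X B T) F μ := by
  refine supermartingale_nat (stronglyAdapted_driftMajorant hX) (integrable_driftMajorant hXint)
    fun n => ?_
  rcases lt_or_ge n T with hn | hn
  · rw [driftMajorant_of_lt hn]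
    filter_upwards [condExp_driftMajorant_succ hXint hn,
      condExp_le_add_condExp (F.le n) (hX n) (hXint n) (hBint n) (hdrift n)] with ω hsplit hstep
    simp only [Pi.add_apply, Finset.sum_apply] at hsplit hstep ⊢
    linarith
  · rw [driftMajorant_of_le (hn.trans n.le_succ), driftMajorant_of_le hn,
      condExp_of_stronglyMeasurable (F.le n) ((hX T).mono (F.mono hn)) (hXint T)]

theorem driftMajorant_nonneg (hXnonneg : ∀ n, 0 ≤ᵐ[μ] X n) (hBnonneg : ∀ n, 0 ≤ᵐ[μ] B n)
    (n : ℕ) : 0 ≤ᵐ[μ] driftMajorant μ F X B T n := by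
  filter_upwards [hXnonneg (min n T), sum_condExp_nonneg (m := F n) hBnonneg (Ico n T)]
    with ω hX hB
  exact add_nonneg hX hB

theorem ae_le_driftMajorant (hBnonneg : ∀ n, 0 ≤ᵐ[μ] B n) :
    ∀ᵐ ω ∂μ, ∀ n ≤ T, X n ω ≤ driftMajorant μ F X B T n ω := by
  filter_upwards [ae_all_iff.2 fun n => sum_condExp_nonneg (m := F n) hBnonneg (Ico n T)]
    with ω hB n hn
  simpa [driftMajorant, min_eq_left hn] using hB n

theorem integral_driftMajorant_zero [IsFiniteMeasure μ] (hXint : ∀ n, Integrable (X n) μ) :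
    ∫ ω, driftMajorant μ F X B T 0 ω ∂μ = ∫ ω, X 0 ω ∂μ + ∑ k ∈ range T, ∫ ω, B k ω ∂μ := by
  rw [driftMajorant, min_eq_left T.zero_le, ← range_eq_Ico,
    integral_add' (hXint 0) (integrable_finsetSum' _ fun _ _ => integrable_condExp)]
  simp only [Finset.sum_apply]
  rw [integral_finsetSum _ fun _ _ => integrable_condExp]
  exact congrArg _ (sum_congr rfl fun k _ => integral_condExp (F.le 0))

end driftMajorant

end MeasureTheory

/-- Maximal inequality for a nonnegative adapted process with controlled drift:
if `X 0 = 0` and `E[X (n+1) | F n] ≤ X n + B n` with `B n` nonnegative integrable,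
then `P(max_{0 ≤ n ≤ T} X n ≥ a) ≤ (∑_{n<T} E[B n]) / a`. -/
theorem maximal_inequality_drift
    {Ω : Type*} {m0 : MeasurableSpace Ω} {μ : Measure Ω} [IsProbabilityMeasure μ]
    (F : Filtration ℕ m0) (X B : ℕ → Ω → ℝ)
    (hadapted : StronglyAdapted F X)
    (hXint : ∀ n, Integrable (X n) μ)
    (hXnonneg : ∀ n, 0 ≤ᵐ[μ] X n)
    (hX0 : X 0 =ᵐ[μ] 0)
    (hBnonneg : ∀ n, 0 ≤ᵐ[μ] B n)
    (hBint : ∀ n, Integrable (B n) μ)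
    (hdrift : ∀ n, ∀ᵐ ω ∂μ, (μ[X (n + 1) | F n]) ω ≤ X n ω + B n ω)
    (a : ℝ) (ha : 0 < a) (T : ℕ) :
    μ {ω | a ≤ (Finset.range (T + 1)).sup' Finset.nonempty_range_add_one (fun n => X n ω)}
      ≤ ENNReal.ofReal ((∑ n ∈ Finset.range T, ∫ ω, B n ω ∂μ) / a) := by
  set Y := driftMajorant μ F X B T
  have hY : Supermartingale Y F μ := supermartingale_driftMajorant hadapted hXint hBint hdrift
  have hmax := hY.maximal_ineq (driftMajorant_nonneg hXnonneg hBnonneg) a T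
  rw [integral_driftMajorant_zero hXint, integral_congr_ae hX0, Pi.zero_def, integral_zero,
    zero_add] at hmax
  have hdiv_nonneg := div_nonneg ((mul_nonneg ha.le measureReal_nonneg).trans hmax) ha.le
  calc μ {ω | a ≤ (range (T + 1)).sup' nonempty_range_add_one fun n => X n ω}
      ≤ μ {ω | a ≤ (range (T + 1)).sup' nonempty_range_add_one fun n => Y n ω} :=
        measure_mono_ae <| (ae_le_driftMajorant hBnonneg).mono fun ω hXY hXa =>
          hXa.trans (sup'_mono_fun fun n hn => hXY n (Nat.lt_succ_iff.1 (mem_range.1 hn)))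
    _ ≤ ENNReal.ofReal ((∑ n ∈ range T, ∫ ω, B n ω ∂μ) / a) := by
        rw [ENNReal.le_ofReal_iff_toReal_le (measure_ne_top _ _) hdiv_nonneg, le_div_iff₀ ha,
          ← measureReal_def, mul_comm]
        exact hmax
end

section
/- Let G : ℝ_p^d → ℝ be strictly concave and differentiable on the open positive orthant, let K ⊆ ℝ_+^d be a compact convex set, and let Λ* ∈ K ∩ ℝ_p^d be the maximizer of G over K ∩ ℝ_p^d. Suppose v ∈ K ∩ ℝ_p^d and ε > 0 satisfy (1+ε)v ∈ K. If additionally ∇G((1+ε)v) = (1+ε)^{−α} ∇G(v) for some α > 0, then ⟨∇G(v), v − Λ*⟩ ≤ −ε ⟨∇G(v), v⟩. -/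
/-!
Since `G((1+ε)v) ≤ G(Λ*)`, concavity puts `G` above `G((1+ε)v)` on the whole segment from
`(1+ε)v` to `Λ*`, so `(1+ε)v` is a minimum of `G` on that segment and the first-order condition
gives `⟨∇G((1+ε)v), Λ* - (1+ε)v⟩ ≥ 0`. Replacing `∇G((1+ε)v)` by the positive multiple
`(1+ε)^{-α} ∇G(v)` turns this into `(1+ε)⟨∇G(v), v⟩ ≤ ⟨∇G(v), Λ*⟩`, which is the claim.
-/

theorem ConcaveOn.isMinOn_segment_of_le {E : Type*} [AddCommGroup E] [Module ℝ E]
    {s : Set E} {f : E → ℝ} (hf : ConcaveOn ℝ s f) {x y : E} (hx : x ∈ s) (hy : y ∈ s)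
    (hxy : f x ≤ f y) : IsMinOn f (segment ℝ x y) x := fun _ hz =>
  (le_min le_rfl hxy).trans (hf.ge_on_segment hx hy hz)

theorem ConcaveOn.fderiv_sub_nonneg_of_le {E : Type*} [NormedAddCommGroup E] [NormedSpace ℝ E]
    {s : Set E} {f : E → ℝ} (hf : ConcaveOn ℝ s f) {x y : E} (hx : x ∈ s) (hy : y ∈ s)
    (hxy : f x ≤ f y) (hd : DifferentiableAt ℝ f x) : 0 ≤ fderiv ℝ f x (y - x) :=
  (hf.isMinOn_segment_of_le hx hy hxy).localize.hasFDerivWithinAt_nonneg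
    hd.hasFDerivAt.hasFDerivWithinAt (sub_mem_posTangentConeAt_of_segment_subset subset_rfl)

theorem alpha_fair_drift_core_general {d : ℕ}
    (G : (Fin d → ℝ) → ℝ)
    (P : Set (Fin d → ℝ)) (hP : P = {x | ∀ i, 0 < x i})
    (hconc : StrictConcaveOn ℝ P G)
    (hdiff : ∀ z ∈ P, DifferentiableAt ℝ G z)
    (K : Set (Fin d → ℝ))
    (Λstar : Fin d → ℝ) (hΛK : Λstar ∈ K ∩ P)
    (hmax : ∀ z ∈ K ∩ P, G z ≤ G Λstar)
    (v : Fin d → ℝ) (hv : v ∈ K ∩ P)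
    (ε : ℝ) (hε : 0 < ε) (hεv : (1 + ε) • v ∈ K)
    (α : ℝ)
    (hhom : fderiv ℝ G ((1 + ε) • v) = ((1 + ε) ^ (-α)) • fderiv ℝ G v) :
    fderiv ℝ G v (v - Λstar) ≤ -ε * fderiv ℝ G v v := by
  have hscale : 0 < 1 + ε := by linarith
  have hwP : (1 + ε) • v ∈ P := by
    subst hP
    exact fun i => smul_pos hscale (hv.2 i)
  have hfoc : 0 ≤ fderiv ℝ G ((1 + ε) • v) (Λstar - (1 + ε) • v) :=
    hconc.concaveOn.fderiv_sub_nonneg_of_le hwP hΛK.2 (hmax _ ⟨hεv, hwP⟩) (hdiff _ hwP)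
  have hfoc_v : (1 + ε) * fderiv ℝ G v v ≤ fderiv ℝ G v Λstar := by
    rw [hhom, smul_apply, smul_eq_mul,
      mul_nonneg_iff_of_pos_left (Real.rpow_pos_of_pos hscale _), map_sub, map_smul,
      smul_eq_mul, sub_nonneg] at hfoc
    exact hfoc
  rw [map_sub]
  linarith

/-- Abstract core of the drift inequality for α-fair allocations: if `G` is strictly
concave and differentiable on the open positive orthant, `Λ*` maximizes `G` over the
positive part of a compact convex set `K ⊆ ℝ_+^d`, `v ∈ K` is positive with
`(1+ε)v ∈ K`, and `∇G((1+ε)v) = (1+ε)^{−α} ∇G(v)`, then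
`⟨∇G(v), v − Λ*⟩ ≤ −ε ⟨∇G(v), v⟩`. -/
theorem alpha_fair_drift_core {d : ℕ}
    (G : (Fin d → ℝ) → ℝ)
    (P : Set (Fin d → ℝ)) (hP : P = {x | ∀ i, 0 < x i})
    (hconc : StrictConcaveOn ℝ P G)
    (hdiff : ∀ z ∈ P, DifferentiableAt ℝ G z)
    (K : Set (Fin d → ℝ)) (hKcompact : IsCompact K) (hKconv : Convex ℝ K)
    (hKnonneg : ∀ x ∈ K, ∀ i, 0 ≤ x i)
    (Λstar : Fin d → ℝ) (hΛK : Λstar ∈ K ∩ P)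
    (hmax : ∀ z ∈ K ∩ P, G z ≤ G Λstar)
    (v : Fin d → ℝ) (hv : v ∈ K ∩ P)
    (ε : ℝ) (hε : 0 < ε) (hεv : (1 + ε) • v ∈ K)
    (α : ℝ) (hα : 0 < α)
    (hhom : fderiv ℝ G ((1 + ε) • v) = ((1 + ε) ^ (-α)) • fderiv ℝ G v) :
    fderiv ℝ G v (v - Λstar) ≤ -ε * fderiv ℝ G v v :=
  alpha_fair_drift_core_general G P hP hconc hdiff K Λstar hΛK hmax v hv ε hε hεv α hhom
end

section
/- Let (X_n) be an irreducible aperiodic discrete-time Markov chain on a countable state space with stationary distribution π, and let Φ be a nonnegative function on the state space such that: (a) |Φ(X_{n+1}) − Φ(X_n)| ≤ ξ almost surely for some ξ > 0, and (b) there exist B > 0 and γ > 0 with E[Φ(X_{n+1}) − Φ(X_n) | X_n] ≤ −γ whenever Φ(X_n) > B. Then for every ℓ ∈ ℤ_+, π({x : Φ(x) > B + 2ξℓ}) ≤ (ξ/(ξ+γ))^{ℓ+1}. -/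
/-!
Stationarity gives `∑ π x * (P f x - f x) = 0` for every bounded `f`. Apply it to `Φ` clamped
to `[a - ξ, b]` with `B ≤ a`: the drift of the clamped function is at most `-γ` where
`a < Φ ≤ b - ξ`, vanishes where `Φ ≤ a - 2ξ` (a step of size at most `ξ` stays where the clamp
is constant), and is at most `ξ` everywhere. Letting `b → ∞` gives
`(ξ + γ) π(Φ > a) ≤ ξ π(Φ > a - 2ξ)`, which iterates to the geometric bound.
-/

open Filter Topology

section

variable {S : Type*}

structure IsStochastic (P : S → S → ℝ) : Prop where
  nonneg : ∀ x y, 0 ≤ P x y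
  tsum_eq_one : ∀ x, ∑' y, P x y = 1

structure IsStationaryDistribution (P : S → S → ℝ) (π : S → ℝ) : Prop where
  nonneg : ∀ x, 0 ≤ π x
  tsum_eq_one : ∑' x, π x = 1
  tsum_mul_eq : ∀ y, ∑' x, π x * P x y = π y

noncomputable def drift (P : S → S → ℝ) (f : S → ℝ) (x : S) : ℝ := ∑' y, P x y * (f y - f x)

structure IsLyapunovFunction (P : S → S → ℝ) (Φ : S → ℝ) (ξ B γ : ℝ) : Prop where
  abs_sub_le : ∀ x y, 0 < P x y → |Φ y - Φ x| ≤ ξ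
  drift_le : ∀ x, B < Φ x → drift P Φ x ≤ -γ

noncomputable def tailMass (π Φ : S → ℝ) (t : ℝ) : ℝ := ∑' x, {x | t < Φ x}.indicator π x

lemma summable_of_tsum_eq_one {f : S → ℝ} (h : ∑' x, f x = 1) : Summable f := by
  by_contra hf
  rw [tsum_eq_zero_of_not_summable hf] at h
  exact zero_ne_one h

lemma summable_mul_of_abs_le {ι : Type*} {w f : ι → ℝ} {C : ℝ} (hw : Summable w)
    (hw0 : ∀ i, 0 ≤ w i) (hf : ∀ i, |f i| ≤ C) : Summable fun i => w i * f i :=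
  (hw.mul_right C).of_norm_bounded fun i => by
    rw [Real.norm_eq_abs, abs_mul, abs_of_nonneg (hw0 i)]
    exact mul_le_mul_of_nonneg_left (hf i) (hw0 i)

lemma abs_clamp_sub_clamp_le (u v lo hi : ℝ) :
    |max (min u hi) lo - max (min v hi) lo| ≤ |u - v| :=
  (abs_max_sub_max_le_abs _ _ _).trans <| (abs_min_sub_min_le_max _ _ _ _).trans (by simp)

namespace IsStochastic

variable {P : S → S → ℝ}

lemma summable_row (hP : IsStochastic P) (x : S) : Summable (P x) :=
  summable_of_tsum_eq_one (hP.tsum_eq_one x)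

lemma abs_tsum_mul_le (hP : IsStochastic P) {f : S → ℝ} {C : ℝ} (hf : ∀ y, |f y| ≤ C) (x : S) :
    |∑' y, P x y * f y| ≤ C := by
  have hterm : ∀ y, ‖P x y * f y‖ ≤ P x y * C := fun y => by
    rw [Real.norm_eq_abs, abs_mul, abs_of_nonneg (hP.nonneg x y)]
    exact mul_le_mul_of_nonneg_left (hf y) (hP.nonneg x y)
  calc |∑' y, P x y * f y| ≤ ∑' y, ‖P x y * f y‖ :=
        norm_tsum_le_tsum_norm (((hP.summable_row x).mul_right C).of_norm_bounded
          fun y => (norm_norm _).trans_le (hterm y))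
    _ ≤ ∑' y, P x y * C :=
        Summable.tsum_le_tsum hterm (((hP.summable_row x).mul_right C).of_nonneg_of_le
          (fun _ => norm_nonneg _) hterm) ((hP.summable_row x).mul_right C)
    _ = C := by rw [tsum_mul_right, hP.tsum_eq_one, one_mul]

lemma drift_eq_sub (hP : IsStochastic P) {f : S → ℝ} {C : ℝ} (hf : ∀ y, |f y| ≤ C) (x : S) :
    drift P f x = ∑' y, P x y * f y - f x := by
  simp only [drift, mul_sub]
  rw [Summable.tsum_sub (summable_mul_of_abs_le (hP.summable_row x) (hP.nonneg x) hf)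
    ((hP.summable_row x).mul_right _), tsum_mul_right, hP.tsum_eq_one, one_mul]

lemma abs_drift_le (hP : IsStochastic P) {f : S → ℝ} {ξ : ℝ} {x : S}
    (hf : ∀ y, 0 < P x y → |f y - f x| ≤ ξ) : |drift P f x| ≤ ξ := by
  have hterm : ∀ y, ‖P x y * (f y - f x)‖ ≤ P x y * ξ := fun y => by
    rcases (hP.nonneg x y).eq_or_lt with h | h
    · simp [← h]
    · rw [Real.norm_eq_abs, abs_mul, abs_of_pos h]
      exact mul_le_mul_of_nonneg_left (hf y h) h.le
  have hsum : Summable fun y => P x y * ξ := (hP.summable_row x).mul_right ξ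
  calc |drift P f x| ≤ ∑' y, ‖P x y * (f y - f x)‖ :=
        norm_tsum_le_tsum_norm (hsum.of_norm_bounded fun y => (norm_norm _).trans_le (hterm y))
    _ ≤ ∑' y, P x y * ξ :=
        Summable.tsum_le_tsum hterm (hsum.of_nonneg_of_le (fun _ => norm_nonneg _) hterm) hsum
    _ = ξ := by rw [tsum_mul_right, hP.tsum_eq_one, one_mul]

lemma drift_congr (hP : IsStochastic P) {f g : S → ℝ} {x : S}
    (h : ∀ y, 0 < P x y → f y - f x = g y - g x) : drift P f x = drift P g x :=
  tsum_congr fun y => by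
    rcases (hP.nonneg x y).eq_or_lt with h0 | h0
    · simp [← h0]
    · rw [h y h0]

lemma drift_eq_zero (hP : IsStochastic P) {f : S → ℝ} {x : S}
    (h : ∀ y, 0 < P x y → f y = f x) : drift P f x = 0 := by
  rw [hP.drift_congr (g := fun _ => 0) fun y hy => by simp [h y hy]]
  simp [drift]

end IsStochastic

namespace IsStationaryDistribution

variable {P : S → S → ℝ} {π : S → ℝ}

lemma summable (hπ : IsStationaryDistribution P π) : Summable π :=
  summable_of_tsum_eq_one hπ.tsum_eq_one

lemma tsum_mul_tsum_mul_eq (hπ : IsStationaryDistribution P π) (hP : IsStochastic P)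
    {f : S → ℝ} {C : ℝ} (hf : ∀ y, |f y| ≤ C) :
    ∑' x, π x * ∑' y, P x y * f y = ∑' y, π y * f y := by
  have hflow : Summable (Function.uncurry fun x y => π x * P x y) :=
    (summable_prod_of_nonneg fun p => mul_nonneg (hπ.nonneg _) (hP.nonneg _ _)).2
      ⟨fun x => (hP.summable_row x).mul_left (π x), by
        simpa only [tsum_mul_left, hP.tsum_eq_one, mul_one] using hπ.summable⟩
  have hsum : Summable (Function.uncurry fun x y => π x * (P x y * f y)) := by
    refine (summable_mul_of_abs_le hflow (fun p => mul_nonneg (hπ.nonneg _) (hP.nonneg _ _))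
      (f := fun p => f p.2) fun p => hf p.2).congr fun p => ?_
    simp only [Function.uncurry, mul_assoc]
  calc ∑' x, π x * ∑' y, P x y * f y = ∑' x, ∑' y, π x * (P x y * f y) := by
        simp only [tsum_mul_left]
    _ = ∑' y, ∑' x, π x * (P x y * f y) := hsum.tsum_comm.symm
    _ = ∑' y, π y * f y := tsum_congr fun y => by
        simp only [← mul_assoc, tsum_mul_right, hπ.tsum_mul_eq]

lemma tsum_mul_drift_eq_zero (hπ : IsStationaryDistribution P π) (hP : IsStochastic P)
    {f : S → ℝ} {C : ℝ} (hf : ∀ y, |f y| ≤ C) : ∑' x, π x * drift P f x = 0 := by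
  simp only [hP.drift_eq_sub hf, mul_sub]
  rw [Summable.tsum_sub
      (summable_mul_of_abs_le hπ.summable hπ.nonneg (hP.abs_tsum_mul_le hf))
      (summable_mul_of_abs_le hπ.summable hπ.nonneg hf),
    hπ.tsum_mul_tsum_mul_eq hP hf, sub_self]

end IsStationaryDistribution

lemma tendsto_tailMass_atTop {π : S → ℝ} (hπ : Summable π) (hπ0 : ∀ x, 0 ≤ π x) (Φ : S → ℝ) :
    Tendsto (tailMass π Φ) atTop (𝓝 0) := by
  unfold tailMass
  have h := tendsto_tsum_of_dominated_convergence (𝓕 := atTop) (g := fun _ => (0 : ℝ))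
    (f := fun t x => {x | t < Φ x}.indicator π x) hπ
    (fun x => tendsto_const_nhds.congr' <| (eventually_ge_atTop (Φ x)).mono fun t ht =>
      (Set.indicator_of_notMem (s := {x | t < Φ x}) (not_lt.2 ht) π).symm)
    (Eventually.of_forall fun t x => by
      rw [Real.norm_eq_abs, abs_of_nonneg (Set.indicator_nonneg (fun x _ => hπ0 x) x)]
      exact Set.indicator_le_self' (fun x _ => hπ0 x) x)
  simpa only [tsum_zero] using h

lemma tailMass_le_one {P : S → S → ℝ} {π : S → ℝ} (hπ : IsStationaryDistribution P π)
    (Φ : S → ℝ) (t : ℝ) : tailMass π Φ t ≤ 1 :=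
  hπ.tsum_eq_one ▸ Summable.tsum_le_tsum (Set.indicator_le_self' fun x _ => hπ.nonneg x)
    (hπ.summable.indicator _) hπ.summable

namespace IsLyapunovFunction

variable {P : S → S → ℝ} {π Φ : S → ℝ} {ξ B γ : ℝ}

lemma abs_drift_clamp_le (hP : IsStochastic P) (hΦ : IsLyapunovFunction P Φ ξ B γ) (lo hi : ℝ)
    (x : S) : |drift P (fun z => max (min (Φ z) hi) lo) x| ≤ ξ :=
  hP.abs_drift_le fun y hy => (abs_clamp_sub_clamp_le _ _ _ _).trans (hΦ.abs_sub_le x y hy)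

lemma drift_clamp_eq_zero (hP : IsStochastic P) (hΦ : IsLyapunovFunction P Φ ξ B γ)
    (hξ : 0 ≤ ξ) {a b : ℝ} {x : S} (hx : Φ x ≤ a - 2 * ξ) :
    drift P (fun z => max (min (Φ z) b) (a - ξ)) x = 0 := by
  have hlow : ∀ z, Φ z ≤ a - ξ → max (min (Φ z) b) (a - ξ) = a - ξ := fun z hz =>
    max_eq_right ((min_le_left _ _).trans hz)
  refine hP.drift_eq_zero fun y hy => ?_
  have hxy := (abs_le.1 (hΦ.abs_sub_le x y hy)).2
  rw [hlow y (by linarith), hlow x (by linarith)]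

lemma drift_clamp_le_neg (hP : IsStochastic P) (hΦ : IsLyapunovFunction P Φ ξ B γ)
    (hξ : 0 ≤ ξ) {a b : ℝ} {x : S} (ha : B ≤ a) (hax : a < Φ x) (hxb : Φ x ≤ b - ξ) :
    drift P (fun z => max (min (Φ z) b) (a - ξ)) x ≤ -γ := by
  have hmid : ∀ z, a - ξ ≤ Φ z → Φ z ≤ b → max (min (Φ z) b) (a - ξ) = Φ z := fun z h1 h2 => by
    rw [min_eq_left h2, max_eq_left h1]
  rw [hP.drift_congr (g := Φ) fun y hy => ?_]
  · exact hΦ.drift_le x (ha.trans_lt hax)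
  · have hxy := abs_le.1 (hΦ.abs_sub_le x y hy)
    rw [hmid y (by linarith) (by linarith), hmid x (by linarith) (by linarith)]

lemma mul_drift_clamp_le (hP : IsStochastic P) (hΦ : IsLyapunovFunction P Φ ξ B γ)
    (hξ : 0 ≤ ξ) {a b : ℝ} (ha : B ≤ a) (hab : a + ξ ≤ b) {x : S} (hπx : 0 ≤ π x) :
    π x * drift P (fun z => max (min (Φ z) b) (a - ξ)) x ≤
      ξ * {x | a - 2 * ξ < Φ x}.indicator π x - (ξ + γ) * {x | a < Φ x}.indicator π x +
        (ξ + γ) * {x | b - ξ < Φ x}.indicator π x := by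
  have hle : π x * drift P (fun z => max (min (Φ z) b) (a - ξ)) x ≤ π x * ξ :=
    mul_le_mul_of_nonneg_left (le_of_abs_le (hΦ.abs_drift_clamp_le hP _ _ x)) hπx
  simp only [Set.indicator, Set.mem_ofPred_eq]
  by_cases h1 : a - 2 * ξ < Φ x
  · by_cases h2 : a < Φ x
    · by_cases h3 : b - ξ < Φ x
      · simp only [h1, h2, h3, if_true]
        linarith
      · have := mul_le_mul_of_nonneg_left
          (hΦ.drift_clamp_le_neg hP hξ ha h2 (not_lt.1 h3)) hπx
        simp only [h1, h2, h3, if_true, if_false]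
        linarith
    · simp only [h1, h2, if_true, if_false, show ¬ b - ξ < Φ x by linarith]
      linarith
  · simp only [h1, if_false, show ¬ a < Φ x by linarith, show ¬ b - ξ < Φ x by linarith,
      hΦ.drift_clamp_eq_zero hP hξ (not_lt.1 h1)]
    simp

lemma tailMass_le_add_tailMass (hP : IsStochastic P) (hπ : IsStationaryDistribution P π)
    (hΦ : IsLyapunovFunction P Φ ξ B γ) (hξ : 0 ≤ ξ) {a b : ℝ} (ha : B ≤ a) (hab : a + ξ ≤ b) :
    (ξ + γ) * tailMass π Φ a ≤
      ξ * tailMass π Φ (a - 2 * ξ) + (ξ + γ) * tailMass π Φ (b - ξ) := by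
  have hind : ∀ t, Summable ({x | t < Φ x}.indicator π) := fun t => hπ.summable.indicator _
  have hclamp : ∀ z, |max (min (Φ z) b) (a - ξ)| ≤ max |a - ξ| |b| := fun z =>
    abs_le_max_abs_abs (le_max_right _ _) (max_le (min_le_right _ _) (by linarith))
  have hlow := (hind (a - 2 * ξ)).mul_left ξ
  have hmid := (hind a).mul_left (ξ + γ)
  have hhigh := (hind (b - ξ)).mul_left (ξ + γ)
  have hsum := Summable.tsum_le_tsum (fun x => hΦ.mul_drift_clamp_le hP hξ ha hab (hπ.nonneg x))
    (summable_mul_of_abs_le hπ.summable hπ.nonneg fun x => hΦ.abs_drift_clamp_le hP _ _ x)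
    ((hlow.sub hmid).add hhigh)
  rw [hπ.tsum_mul_drift_eq_zero hP hclamp, (hlow.sub hmid).tsum_add hhigh, hlow.tsum_sub hmid,
    tsum_mul_left, tsum_mul_left, tsum_mul_left] at hsum
  simp only [tailMass]
  linarith

lemma tailMass_le_mul_tailMass (hP : IsStochastic P) (hπ : IsStationaryDistribution P π)
    (hΦ : IsLyapunovFunction P Φ ξ B γ) (hξ : 0 ≤ ξ) (hγ : 0 < γ) {a : ℝ} (ha : B ≤ a) :
    tailMass π Φ a ≤ ξ / (ξ + γ) * tailMass π Φ (a - 2 * ξ) := by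
  have hlim : Tendsto (fun b => ξ * tailMass π Φ (a - 2 * ξ) + (ξ + γ) * tailMass π Φ (b - ξ))
      atTop (𝓝 (ξ * tailMass π Φ (a - 2 * ξ) + (ξ + γ) * 0)) :=
    tendsto_const_nhds.add <| ((tendsto_tailMass_atTop hπ.summable hπ.nonneg Φ).comp
      (tendsto_atTop_add_const_right _ (-ξ) tendsto_id)).const_mul _
  have hbound := ge_of_tendsto hlim <| (eventually_ge_atTop (a + ξ)).mono fun b hb =>
    hΦ.tailMass_le_add_tailMass hP hπ hξ ha hb
  rw [div_mul_eq_mul_div, le_div_iff₀ (by linarith)]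
  linarith

lemma tailMass_le_pow (hP : IsStochastic P) (hπ : IsStationaryDistribution P π)
    (hΦ : IsLyapunovFunction P Φ ξ B γ) (hξ : 0 ≤ ξ) (hγ : 0 < γ) (ℓ : ℕ) :
    tailMass π Φ (B + 2 * ξ * ℓ) ≤ (ξ / (ξ + γ)) ^ (ℓ + 1) := by
  have hκ : 0 ≤ ξ / (ξ + γ) := by positivity
  induction ℓ with
  | zero =>
    have h := hΦ.tailMass_le_mul_tailMass hP hπ hξ hγ (le_refl B)
    simpa using h.trans (mul_le_mul_of_nonneg_left (tailMass_le_one hπ Φ _) hκ)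
  | succ ℓ ih =>
    calc tailMass π Φ (B + 2 * ξ * ↑(ℓ + 1))
        ≤ ξ / (ξ + γ) * tailMass π Φ (B + 2 * ξ * ↑(ℓ + 1) - 2 * ξ) :=
          hΦ.tailMass_le_mul_tailMass hP hπ hξ hγ (by push_cast; nlinarith)
      _ = ξ / (ξ + γ) * tailMass π Φ (B + 2 * ξ * ℓ) := by push_cast; ring_nf
      _ ≤ ξ / (ξ + γ) * (ξ / (ξ + γ)) ^ (ℓ + 1) := mul_le_mul_of_nonneg_left ih hκ
      _ = (ξ / (ξ + γ)) ^ (ℓ + 1 + 1) := by ring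

end IsLyapunovFunction

end

theorem stationary_exponential_tail_bound_general
    {S : Type*}
    (P : S → S → ℝ) (π : S → ℝ) (Φ : S → ℝ)
    (ξ B γ : ℝ) (hξ : 0 < ξ) (hγ : 0 < γ)
    (hPnonneg : ∀ x y, 0 ≤ P x y) (hProw : ∀ x, ∑' y, P x y = 1)
    (hπnonneg : ∀ x, 0 ≤ π x) (hπsum : ∑' x, π x = 1)
    (hstationary : ∀ y, ∑' x, π x * P x y = π y)
    -- Lyapunov function: nonnegative, bounded increments, negative drift
    (hbdd : ∀ x y, 0 < P x y → |Φ y - Φ x| ≤ ξ)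
    (hdrift : ∀ x, B < Φ x → ∑' y, P x y * (Φ y - Φ x) ≤ -γ) :
    ∀ ℓ : ℕ, (∑' x : {x : S // B + 2 * ξ * ℓ < Φ x}, π x) ≤ (ξ / (ξ + γ)) ^ (ℓ + 1) := by
  intro ℓ
  exact (tsum_subtype {x | B + 2 * ξ * ℓ < Φ x} π).trans_le <|
    IsLyapunovFunction.tailMass_le_pow ⟨hPnonneg, hProw⟩ ⟨hπnonneg, hπsum, hstationary⟩
      ⟨hbdd, hdrift⟩ hξ.le hγ ℓ

/-- Exponential tail bound for the stationary distribution of an irreducible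
aperiodic countable-state Markov chain with a Lyapunov function having bounded
increments and negative drift (Bertsimas–Gamarnik–Tsitsiklis / Hajek). -/
theorem stationary_exponential_tail_bound
    {S : Type*} [Countable S] [DecidableEq S]
    (P : S → S → ℝ) (π : S → ℝ) (Φ : S → ℝ)
    (ξ B γ : ℝ) (hξ : 0 < ξ) (hB : 0 < B) (hγ : 0 < γ)
    (hPnonneg : ∀ x y, 0 ≤ P x y) (hProw : ∀ x, ∑' y, P x y = 1)
    (hπnonneg : ∀ x, 0 ≤ π x) (hπsum : ∑' x, π x = 1)
    (hstationary : ∀ y, ∑' x, π x * P x y = π y)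
    -- n-step transition probabilities
    (Pn : ℕ → S → S → ℝ)
    (hPn0 : ∀ x y, Pn 0 x y = if x = y then 1 else 0)
    (hPnsucc : ∀ m x y, Pn (m + 1) x y = ∑' z, Pn m x z * P z y)
    -- irreducibility and aperiodicity
    (hirred : ∀ x y, ∃ m, 0 < Pn m x y)
    (haper : ∀ x, ∃ N, ∀ m ≥ N, 0 < Pn m x x)
    -- Lyapunov function: nonnegative, bounded increments, negative drift
    (hΦnonneg : ∀ x, 0 ≤ Φ x)
    (hbdd : ∀ x y, 0 < P x y → |Φ y - Φ x| ≤ ξ)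
    (hdrift : ∀ x, B < Φ x → ∑' y, P x y * (Φ y - Φ x) ≤ -γ) :
    ∀ ℓ : ℕ, (∑' x : {x : S // B + 2 * ξ * ℓ < Φ x}, π x) ≤ (ξ / (ξ + γ)) ^ (ℓ + 1) :=
  stationary_exponential_tail_bound_general P π Φ ξ B γ hξ hγ hPnonneg hProw hπnonneg hπsum
    hstationary hbdd hdrift
end

section
/- Let w_i > 0 for i in a finite index set I and α ∈ (0,1), and let L be as above (L(n) = [(α+1) Σ_i w_i H_α(n_i)]^{1/(α+1)}). For any n ∈ ℝ_+^I and m ∈ {0, ±e_i : i ∈ I} with n + m ∈ ℝ_+^I, |L(n+m) − L(n)| ≤ max_i w_i^{1/(α+1)} + 2 (2 Σ_i w_i)^{1/(α+1)}. -/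
/-!
Write `p = α + 1`. Since `h_α(s) = s^α` for `s ≥ 1` and `0 ≤ h_α(s) ≤ s^α` on `[0, 1]`, we have
`r^p - 1 ≤ p H_α(r) ≤ r^p` for `r ≥ 0`, so `L(n)^p` lies between `N(n)^p - ∑ w_i` and `N(n)^p`,
where `N` is the weighted `p`-norm. Taking `p`-th roots (which are subadditive) gives
`L ≤ N ≤ L + (∑ w_i)^{1/p}`, and the reverse triangle inequality for `N` bounds
`|N(n + m) - N(n)|` by `N(m) ≤ max_i w_i^{1/p}`.
-/

open Finset

/-- The smoothed power function `h_α` for `α ∈ (0,1)`. -/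
noncomputable def hfun (α : ℝ) (r : ℝ) : ℝ :=
  if r < 1 then (α - 1) * r ^ 3 + (1 - α) * r ^ 2 + r else r ^ α

/-- The antiderivative `H_α(r) = ∫_0^r h_α(s) ds`. -/
noncomputable def Hfun (α : ℝ) (r : ℝ) : ℝ := ∫ s in (0 : ℝ)..r, hfun α s

open Real

lemma hfun_of_one_le {α r : ℝ} (hr : 1 ≤ r) : hfun α r = r ^ α :=
  if_neg hr.not_gt

lemma continuous_hfun {α : ℝ} (hα : 0 ≤ α) : Continuous (hfun α) := by
  have hif : hfun α = fun r =>
      if 1 ≤ r then r ^ α else (α - 1) * r ^ 3 + (1 - α) * r ^ 2 + r := by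
    funext r
    simp only [hfun, ← not_lt, ite_not]
  rw [hif]
  refine (continuous_rpow_const hα).if_le (by fun_prop) continuous_const continuous_id
    fun r hr => ?_
  simp [← hr]

lemma hfun_nonneg {α s : ℝ} (hα : α ≤ 1) (hs : 0 ≤ s) : 0 ≤ hfun α s := by
  unfold hfun
  split_ifs with hs1
  · nlinarith [mul_nonneg (mul_nonneg (sub_nonneg.2 hα) (sq_nonneg s)) (sub_nonneg.2 hs1.le)]
  · exact rpow_nonneg hs α

lemma hfun_le_rpow {α s : ℝ} (hα0 : 0 < α) (hα1 : α ≤ 1) (hs : 0 ≤ s) : hfun α s ≤ s ^ α := by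
  unfold hfun
  split_ifs with hs1
  · rcases hs.eq_or_lt with rfl | hs0
    · simp [zero_rpow hα0.ne']
    -- tangent line of the convex function `s ↦ s^(α-1)` at `s = 1`
    have htangent : 1 + (1 - α) * (1 - s) ≤ s ^ (α - 1) := by
      rw [rpow_def_of_pos hs0]
      nlinarith [log_le_sub_one_of_pos hs0, add_one_le_exp (log s * (α - 1))]
    have hsplit : s ^ α = s * s ^ (α - 1) := by
      rw [← rpow_one_add' hs0.le (by linarith), add_sub_cancel]
    rw [hsplit]
    nlinarith [mul_le_mul_of_nonneg_left htangent hs0.le,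
      mul_nonneg (mul_nonneg (sub_nonneg.2 hα1) hs0.le) (sub_nonneg.2 hs1.le)]
  · exact le_rfl

lemma Hfun_nonneg {α r : ℝ} (hα : α ≤ 1) (hr : 0 ≤ r) : 0 ≤ Hfun α r :=
  intervalIntegral.integral_nonneg hr fun _ hs => hfun_nonneg hα hs.1

lemma mul_Hfun_le_rpow {α r : ℝ} (hα0 : 0 < α) (hα1 : α ≤ 1) (hr : 0 ≤ r) :
    (α + 1) * Hfun α r ≤ r ^ (α + 1) := by
  have hle : Hfun α r ≤ ∫ s in (0 : ℝ)..r, s ^ α :=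
    intervalIntegral.integral_mono_on hr ((continuous_hfun hα0.le).intervalIntegrable _ _)
      ((continuous_rpow_const hα0.le).intervalIntegrable _ _) fun s hs =>
        hfun_le_rpow hα0 hα1 hs.1
  rw [integral_rpow (Or.inl (by linarith)), zero_rpow (by linarith), sub_zero,
    le_div_iff₀ (by linarith)] at hle
  linarith

lemma Hfun_eq_of_one_le {α r : ℝ} (hα : 0 ≤ α) (hr : 1 ≤ r) :
    Hfun α r = Hfun α 1 + (r ^ (α + 1) - 1) / (α + 1) := by
  have hint := (continuous_hfun hα).intervalIntegrable (μ := MeasureTheory.volume)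
  unfold Hfun
  rw [← intervalIntegral.integral_add_adjacent_intervals (hint 0 1) (hint 1 r)]
  congr 1
  rw [intervalIntegral.integral_congr (g := fun s => s ^ α) fun s hs =>
      hfun_of_one_le (Set.uIcc_of_le hr ▸ hs).1,
    integral_rpow (Or.inl (by linarith)), one_rpow]

lemma rpow_sub_one_le_mul_Hfun {α r : ℝ} (hα0 : 0 ≤ α) (hα1 : α ≤ 1) (hr : 0 ≤ r) :
    r ^ (α + 1) - 1 ≤ (α + 1) * Hfun α r := by
  rcases le_total r 1 with hr1 | hr1
  · have hpow : r ^ (α + 1) ≤ 1 := rpow_le_one hr hr1 (by linarith)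
    nlinarith [Hfun_nonneg hα1 hr]
  · rw [Hfun_eq_of_one_le hα0 hr1, mul_add, mul_div_cancel₀ _ (by linarith)]
    nlinarith [Hfun_nonneg hα1 zero_le_one]

section WeightedLpNorm

variable {I : Type*} [Fintype I]

noncomputable def weightedLpNorm (w : I → ℝ) (p : ℝ) (v : I → ℝ) : ℝ :=
  (∑ i, w i * |v i| ^ p) ^ (1 / p)

lemma weightedLpNorm_eq_Lp {w : I → ℝ} (hw : ∀ i, 0 ≤ w i) {p : ℝ} (hp : p ≠ 0) (v : I → ℝ) :
    weightedLpNorm w p v = (∑ i, |w i ^ (1 / p) * v i| ^ p) ^ (1 / p) := by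
  unfold weightedLpNorm
  congr 1
  refine sum_congr rfl fun i _ => ?_
  rw [abs_mul, abs_of_nonneg (rpow_nonneg (hw i) _), mul_rpow (rpow_nonneg (hw i) _)
    (abs_nonneg _), one_div, rpow_inv_rpow (hw i) hp]

lemma weightedLpNorm_add_le {w : I → ℝ} (hw : ∀ i, 0 ≤ w i) {p : ℝ} (hp : 1 ≤ p)
    (u v : I → ℝ) : weightedLpNorm w p (u + v) ≤ weightedLpNorm w p u + weightedLpNorm w p v := by
  simp only [weightedLpNorm_eq_Lp hw (by linarith : p ≠ 0), Pi.add_apply, mul_add]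
  exact Lp_add_le univ _ _ hp

lemma weightedLpNorm_neg (w : I → ℝ) (p : ℝ) (v : I → ℝ) :
    weightedLpNorm w p (-v) = weightedLpNorm w p v := by
  simp [weightedLpNorm]

lemma abs_weightedLpNorm_sub_le {w : I → ℝ} (hw : ∀ i, 0 ≤ w i) {p : ℝ} (hp : 1 ≤ p)
    (u v : I → ℝ) :
    |weightedLpNorm w p u - weightedLpNorm w p v| ≤ weightedLpNorm w p (u - v) := by
  have huv := weightedLpNorm_add_le hw hp (u - v) v
  have hvu := weightedLpNorm_add_le hw hp (v - u) u
  rw [sub_add_cancel] at huv hvu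
  rw [← neg_sub u v, weightedLpNorm_neg] at hvu
  exact abs_sub_le_iff.2 ⟨by linarith, by linarith⟩

lemma weightedLpNorm_zero (w : I → ℝ) {p : ℝ} (hp : p ≠ 0) : weightedLpNorm w p 0 = 0 := by
  simp [weightedLpNorm, hp]

lemma weightedLpNorm_single [DecidableEq I] (w : I → ℝ) {p : ℝ} (hp : p ≠ 0) (j : I) :
    weightedLpNorm w p (Pi.single j 1) = w j ^ (1 / p) := by
  unfold weightedLpNorm
  rw [sum_eq_single j (fun i _ hij => by simp [hij, hp]) (by simp)]
  simp

end WeightedLpNorm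

section SmoothedNorm

variable {I : Type*} [Fintype I] {w : I → ℝ} {α : ℝ}

noncomputable def smoothedNorm (w : I → ℝ) (α : ℝ) (v : I → ℝ) : ℝ :=
  ((α + 1) * ∑ i, w i * Hfun α (v i)) ^ (1 / (α + 1))

lemma mul_sum_mul_Hfun_nonneg (hw : ∀ i, 0 ≤ w i) (hα0 : 0 ≤ α) (hα1 : α ≤ 1)
    {v : I → ℝ} (hv : ∀ i, 0 ≤ v i) : 0 ≤ (α + 1) * ∑ i, w i * Hfun α (v i) :=
  mul_nonneg (by linarith) (sum_nonneg fun i _ => mul_nonneg (hw i) (Hfun_nonneg hα1 (hv i)))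

lemma smoothedNorm_le_weightedLpNorm (hw : ∀ i, 0 ≤ w i) (hα0 : 0 < α) (hα1 : α ≤ 1)
    {v : I → ℝ} (hv : ∀ i, 0 ≤ v i) : smoothedNorm w α v ≤ weightedLpNorm w (α + 1) v := by
  refine rpow_le_rpow (mul_sum_mul_Hfun_nonneg hw hα0.le hα1 hv) ?_ (by positivity)
  rw [mul_sum]
  refine sum_le_sum fun i _ => ?_
  rw [abs_of_nonneg (hv i), mul_left_comm]
  exact mul_le_mul_of_nonneg_left (mul_Hfun_le_rpow hα0 hα1 (hv i)) (hw i)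

lemma weightedLpNorm_le_smoothedNorm_add (hw : ∀ i, 0 ≤ w i) (hα0 : 0 ≤ α) (hα1 : α ≤ 1)
    {v : I → ℝ} (hv : ∀ i, 0 ≤ v i) :
    weightedLpNorm w (α + 1) v ≤ smoothedNorm w α v + (∑ i, w i) ^ (1 / (α + 1)) := by
  have hq0 : 0 ≤ 1 / (α + 1) := by positivity
  have hsum : ∑ i, w i * |v i| ^ (α + 1) ≤ (α + 1) * ∑ i, w i * Hfun α (v i) + ∑ i, w i := by
    rw [mul_sum, ← sum_add_distrib]
    refine sum_le_sum fun i _ => ?_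
    rw [abs_of_nonneg (hv i), mul_left_comm]
    nlinarith [mul_le_mul_of_nonneg_left (rpow_sub_one_le_mul_Hfun hα0 hα1 (hv i)) (hw i)]
  calc weightedLpNorm w (α + 1) v
      ≤ ((α + 1) * ∑ i, w i * Hfun α (v i) + ∑ i, w i) ^ (1 / (α + 1)) :=
        rpow_le_rpow (sum_nonneg fun i _ => mul_nonneg (hw i) (by positivity)) hsum hq0
    _ ≤ smoothedNorm w α v + (∑ i, w i) ^ (1 / (α + 1)) :=
        rpow_add_le_add_rpow (mul_sum_mul_Hfun_nonneg hw hα0 hα1 hv)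
          (sum_nonneg fun i _ => hw i) hq0 (div_le_one_of_le₀ (by linarith) (by linarith))

lemma abs_smoothedNorm_sub_le (hw : ∀ i, 0 ≤ w i) (hα0 : 0 < α) (hα1 : α ≤ 1)
    {u v : I → ℝ} (hu : ∀ i, 0 ≤ u i) (hv : ∀ i, 0 ≤ v i) :
    |smoothedNorm w α u - smoothedNorm w α v|
      ≤ weightedLpNorm w (α + 1) (u - v) + (∑ i, w i) ^ (1 / (α + 1)) := by
  have hN := abs_weightedLpNorm_sub_le hw (by linarith : 1 ≤ α + 1) u v
  have hLu := smoothedNorm_le_weightedLpNorm hw hα0 hα1 hu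
  have hLv := smoothedNorm_le_weightedLpNorm hw hα0 hα1 hv
  have hNu := weightedLpNorm_le_smoothedNorm_add hw hα0.le hα1 hu
  have hNv := weightedLpNorm_le_smoothedNorm_add hw hα0.le hα1 hv
  rw [abs_le] at hN ⊢
  constructor <;> linarith

end SmoothedNorm

/-- Bounded increments for the smoothed Lyapunov function
`L(n) = [(α+1) ∑_i w_i H_α(n_i)]^{1/(α+1)}` under single-coordinate unit changes:
`|L(n+m) − L(n)| ≤ max_i w_i^{1/(α+1)} + 2 (2 ∑_i w_i)^{1/(α+1)}`. -/
theorem smoothed_norm_bounded_increments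
    {I : Type*} [Fintype I] [Nonempty I] [DecidableEq I]
    (w : I → ℝ) (hw : ∀ i, 0 < w i)
    (α : ℝ) (hα0 : 0 < α) (hα1 : α < 1)
    (n m : I → ℝ) (hn : ∀ i, 0 ≤ n i) (hnm : ∀ i, 0 ≤ n i + m i)
    (hm : m = 0 ∨ ∃ i, m = Pi.single i (1 : ℝ) ∨ m = -Pi.single i (1 : ℝ)) :
    |((α + 1) * ∑ i, w i * Hfun α (n i + m i)) ^ (1 / (α + 1))
        - ((α + 1) * ∑ i, w i * Hfun α (n i)) ^ (1 / (α + 1))|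
      ≤ Finset.univ.sup' Finset.univ_nonempty (fun i => w i ^ (1 / (α + 1)))
          + 2 * (2 * ∑ i, w i) ^ (1 / (α + 1)) := by
  have hp : α + 1 ≠ 0 := by linarith
  have hw' : ∀ i, 0 ≤ w i := fun i => (hw i).le
  have hsup (j : I) : w j ^ (1 / (α + 1))
      ≤ univ.sup' univ_nonempty (fun i => w i ^ (1 / (α + 1))) :=
    le_sup' (fun i => w i ^ (1 / (α + 1))) (mem_univ j)
  have hm_norm : weightedLpNorm w (α + 1) m
      ≤ univ.sup' univ_nonempty (fun i => w i ^ (1 / (α + 1))) := by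
    rcases hm with rfl | ⟨j, rfl | rfl⟩
    · rw [weightedLpNorm_zero w hp]
      exact (rpow_nonneg (hw' _) _).trans (hsup (Classical.arbitrary I))
    · exact (weightedLpNorm_single w hp j).trans_le (hsup j)
    · rw [weightedLpNorm_neg]
      exact (weightedLpNorm_single w hp j).trans_le (hsup j)
  have hW : (∑ i, w i) ^ (1 / (α + 1)) ≤ 2 * (2 * ∑ i, w i) ^ (1 / (α + 1)) := by
    have hW0 : 0 ≤ ∑ i, w i := sum_nonneg fun i _ => hw' i
    have hmono := rpow_le_rpow hW0 (by linarith : ∑ i, w i ≤ 2 * ∑ i, w i)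
      (by positivity : 0 ≤ 1 / (α + 1))
    have h2W := rpow_nonneg (by linarith : 0 ≤ 2 * ∑ i, w i) (1 / (α + 1))
    linarith
  calc _ = |smoothedNorm w α (n + m) - smoothedNorm w α n| := rfl
    _ ≤ weightedLpNorm w (α + 1) (n + m - n) + (∑ i, w i) ^ (1 / (α + 1)) :=
        abs_smoothedNorm_sub_le hw' hα0 hα1.le hnm hn
    _ ≤ _ := by
        rw [add_sub_cancel_left]
        exact add_le_add hm_norm hW
end
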